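/- Let Ω be a standard Borel probability space and let U : Ω → 𝒰, M₁ : Ω → ℳ₁, M₂ : Ω → ℳ₂, N : Ω → 𝒩 be mutually independent random variables into measurable spaces. Define W(ω) = φ(U(ω), M₁(ω)), E(ω) = ψ(U(ω), M₂(ω)), and X_a(ω) = h(W(ω), N(ω)) for measurable maps φ : 𝒰 × ℳ₁ → 𝒲, ψ : 𝒰 × ℳ₂ → ℰ, h : 𝒲 × 𝒩 → 𝒳. Then X_a and E are conditionally independent given the σ-algebra generated by W. -/

import Mathlib

/-! Let `𝒢 = σ(U, M₁, M₂)`. Both `W` and `E` are `𝒢`-measurable, `N` is independent of `𝒢`, and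
`X_a` is `σ(W) ⊔ σ(N)`-measurable, so it suffices that `σ(W) ⊔ σ(N)` and `𝒢` are conditionally
independent given `σ(W)`. On the π-system of sets `S ∩ T` with `S ∈ σ(W)`, `T ∈ σ(N)`, and for
`B ∈ 𝒢`, conditioning first on `𝒢` replaces `1_T` by its mean `μ T`, so
`μ⟦S ∩ T ∩ B | σ(W)⟧ = 1_S · μ T · μ⟦B | σ(W)⟧ = μ⟦S ∩ T | σ(W)⟧ · μ⟦B | σ(W)⟧`. -/

open MeasureTheory ProbabilityTheory

lemma MeasurableSpace.comap_comp_prodMk_le {α β γ δ : Type*} {mβ : MeasurableSpace β}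
    {mγ : MeasurableSpace γ} {mδ : MeasurableSpace δ} {f : β × γ → δ} (hf : Measurable f)
    (X : α → β) (Y : α → γ) :
    mδ.comap (fun ω => f (X ω, Y ω)) ≤ mβ.comap X ⊔ mγ.comap Y := by
  rw [← comap_prodMk]
  exact comap_comp.symm.trans_le (comap_mono hf.comap_le)

lemma IsPiSystem.image2_inter {α : Type*} {C D : Set (Set α)} (hC : IsPiSystem C)
    (hD : IsPiSystem D) : IsPiSystem (Set.image2 (· ∩ ·) C D) := by
  rintro _ ⟨s₁, hs₁, t₁, ht₁, rfl⟩ _ ⟨s₂, hs₂, t₂, ht₂, rfl⟩ hne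
  rw [Set.inter_inter_inter_comm] at hne ⊢
  exact Set.mem_image2_of_mem (hC _ hs₁ _ hs₂ hne.left) (hD _ ht₁ _ ht₂ hne.right)

lemma MeasurableSpace.generateFrom_image2_inter {α : Type*} (m₁ m₂ : MeasurableSpace α) :
    generateFrom (Set.image2 (· ∩ ·) {s | MeasurableSet[m₁] s} {t | MeasurableSet[m₂] t}) =
      m₁ ⊔ m₂ := by
  refine le_antisymm (generateFrom_le ?_) (sup_le (fun s hs => ?_) (fun t ht => ?_))
  · rintro _ ⟨s, hs, t, ht, rfl⟩
    exact (le_sup_left (b := m₂) s hs).inter (le_sup_right (a := m₁) t ht)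
  · exact measurableSet_generateFrom ⟨s, hs, Set.univ, .univ, Set.inter_univ s⟩
  · exact measurableSet_generateFrom ⟨Set.univ, .univ, t, ht, Set.univ_inter t⟩

section

open MeasurableSpace

variable {Ω : Type*} {m' mN mG : MeasurableSpace Ω} {mΩ : MeasurableSpace Ω}
  {μ : Measure Ω} [IsFiniteMeasure μ]

lemma condExp_inter_of_measurableSet_left {S B : Set Ω} (hS : MeasurableSet[m'] S)
    (hB : MeasurableSet B) :
    μ⟦S ∩ B | m'⟧ =ᵐ[μ] S.indicator (μ⟦B | m'⟧) := by
  rw [← Set.indicator_indicator]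
  exact condExp_indicator ((integrable_const 1).indicator hB) hS

lemma condExp_set_of_indep (hG : mG ≤ mΩ) (hN : mN ≤ mΩ) (hind : Indep mN mG μ) {T : Set Ω}
    (hT : MeasurableSet[mN] T) : μ⟦T | mG⟧ =ᵐ[μ] fun _ => μ.real T := by
  simpa [integral_indicator (hN T hT)] using
    condExp_indep_eq hN hG ((stronglyMeasurable_const (b := (1 : ℝ))).indicator hT) hind

lemma condExp_inter_of_indep (hm'G : m' ≤ mG) (hG : mG ≤ mΩ) (hN : mN ≤ mΩ)
    (hind : Indep mN mG μ) {T A : Set Ω} (hT : MeasurableSet[mN] T) (hA : MeasurableSet[mG] A) :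
    μ⟦T ∩ A | m'⟧ =ᵐ[μ] μ.real T • μ⟦A | m'⟧ := by
  calc μ⟦T ∩ A | m'⟧
      =ᵐ[μ] μ[μ[A.indicator (T.indicator fun _ => (1 : ℝ)) | mG] | m'] := by
        rw [Set.inter_comm, ← Set.indicator_indicator]
        exact (condExp_condExp_of_le hm'G hG).symm
    _ =ᵐ[μ] μ[A.indicator (fun _ => μ.real T) | m'] := by
        refine condExp_congr_ae ?_
        filter_upwards [condExp_indicator ((integrable_const (1 : ℝ)).indicator (hN T hT)) hA,
          condExp_set_of_indep hG hN hind hT] with ω h1 h2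
        by_cases hω : ω ∈ A <;> simp [h1, h2, hω]
    _ =ᵐ[μ] μ.real T • μ⟦A | m'⟧ := by
        have hc : A.indicator (fun _ => μ.real T) = μ.real T • A.indicator fun _ => (1 : ℝ) := by
          ext ω
          by_cases hω : ω ∈ A <;> simp [hω]
        rw [hc]
        exact condExp_smul _ _ _

theorem condIndep_sup_of_indep [StandardBorelSpace Ω] (hm'G : m' ≤ mG) (hG : mG ≤ mΩ)
    (hN : mN ≤ mΩ) (hind : Indep mN mG μ) : CondIndep m' (m' ⊔ mN) mG (hm'G.trans hG) μ := by
  have hm' := hm'G.trans hG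
  refine CondIndepSets.condIndep (sup_le hm' hN) hG
    ((@isPiSystem_measurableSet Ω m').image2_inter (@isPiSystem_measurableSet Ω mN))
    (@isPiSystem_measurableSet Ω mG) (generateFrom_image2_inter m' mN).symm
    (@generateFrom_measurableSet Ω mG).symm ?_
  refine (condIndepSets_iff _ _ _ _ ?_ (fun B hB => hG B hB) μ).2 ?_
  · rintro _ ⟨S, hS, T, hT, rfl⟩
    exact (hm' S hS).inter (hN T hT)
  rintro _ B ⟨S, hS, T, hT, rfl⟩ hB
  have hSTB : μ⟦S ∩ T ∩ B | m'⟧ =ᵐ[μ] S.indicator (μ.real T • μ⟦B | m'⟧) := by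
    rw [Set.inter_assoc]
    filter_upwards [condExp_inter_of_measurableSet_left hS ((hN T hT).inter (hG B hB)),
      condExp_inter_of_indep hm'G hG hN hind hT hB] with ω h1 h2
    by_cases hω : ω ∈ S <;> simp [h1, h2, hω]
  have hST : μ⟦S ∩ T | m'⟧ =ᵐ[μ] S.indicator fun _ => μ.real T := by
    filter_upwards [condExp_inter_of_measurableSet_left hS (hN T hT),
      condExp_set_of_indep hm' hN (indep_of_indep_of_le_right hind hm'G) hT] with ω h1 h2
    by_cases hω : ω ∈ S <;> simp [h1, h2, hω]
  filter_upwards [hSTB, hST] with ω h1 h2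
  by_cases hω : ω ∈ S <;> simp [h1, h2, hω]

end

/-- Confounded case of the paper's Lemma: with a latent confounder `U` of the anomaly
label `W = φ (U, M₁)` and the environment `E = ψ (U, M₂)`, and content features
`X_a = h (W, N)`, the variables `X_a` and `E` are conditionally independent given the
σ-algebra generated by `W`. -/
theorem content_condIndep_env_of_confounding
    {Ω 𝒰 ℳ₁ ℳ₂ 𝒩 𝒲 ℰ 𝒳 : Type*}
    [MeasurableSpace Ω] [StandardBorelSpace Ω]
    [m𝒰 : MeasurableSpace 𝒰] [mℳ₁ : MeasurableSpace ℳ₁] [mℳ₂ : MeasurableSpace ℳ₂]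
    [m𝒩 : MeasurableSpace 𝒩] [m𝒲 : MeasurableSpace 𝒲] [mℰ : MeasurableSpace ℰ]
    [MeasurableSpace 𝒳]
    (μ : Measure Ω) [IsProbabilityMeasure μ]
    (U : Ω → 𝒰) (M₁ : Ω → ℳ₁) (M₂ : Ω → ℳ₂) (N : Ω → 𝒩)
    (hU : Measurable U) (hM₁ : Measurable M₁) (hM₂ : Measurable M₂) (hN : Measurable N)
    (hindep : iIndep
      ![MeasurableSpace.comap U m𝒰, MeasurableSpace.comap M₁ mℳ₁,
        MeasurableSpace.comap M₂ mℳ₂, MeasurableSpace.comap N m𝒩] μ)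
    (φ : 𝒰 × ℳ₁ → 𝒲) (ψ : 𝒰 × ℳ₂ → ℰ) (h : 𝒲 × 𝒩 → 𝒳)
    (hφ : Measurable φ) (hψ : Measurable ψ) (hh : Measurable h) :
    CondIndepFun (MeasurableSpace.comap (fun ω => φ (U ω, M₁ ω)) m𝒲)
      ((hφ.comp (hU.prodMk hM₁)).comap_le)
      (fun ω => h (φ (U ω, M₁ ω), N ω)) (fun ω => ψ (U ω, M₂ ω)) μ := by
  have hG : m𝒰.comap U ⊔ mℳ₁.comap M₁ ⊔ mℳ₂.comap M₂ ≤ ‹MeasurableSpace Ω› :=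
    sup_le (sup_le hU.comap_le hM₁.comap_le) hM₂.comap_le
  have hind : Indep (m𝒩.comap N) (m𝒰.comap U ⊔ mℳ₁.comap M₁ ⊔ mℳ₂.comap M₂) μ := by
    have h_le : ∀ i, (![m𝒰.comap U, mℳ₁.comap M₁, mℳ₂.comap M₂, m𝒩.comap N] i) ≤ ‹_› := by
      intro i
      fin_cases i
      exacts [hU.comap_le, hM₁.comap_le, hM₂.comap_le, hN.comap_le]
    have h := indep_iSup_of_disjoint h_le hindep (S := {3}) (T := {0, 1, 2}) (by simp)
    rw [iSup_singleton, iSup_insert, iSup_insert, iSup_singleton] at h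
    simpa [sup_assoc] using h
  set G := m𝒰.comap U ⊔ mℳ₁.comap M₁ ⊔ mℳ₂.comap M₂
  have hWG : m𝒲.comap (fun ω => φ (U ω, M₁ ω)) ≤ G :=
    (MeasurableSpace.comap_comp_prodMk_le hφ U M₁).trans le_sup_left
  have hEG : mℰ.comap (fun ω => ψ (U ω, M₂ ω)) ≤ G :=
    (MeasurableSpace.comap_comp_prodMk_le hψ U M₂).trans (sup_le_sup_right le_sup_left _)
  exact condIndep_of_condIndep_of_le_right
    (condIndep_of_condIndep_of_le_left (condIndep_sup_of_indep hWG hG hN.comap_le hind)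
      (MeasurableSpace.comap_comp_prodMk_le hh _ N)) hEG
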